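/- Fix t ∈ (0,1) and p ∈ (1,∞). For each integer k ≥ 2, set y_k = min(1, φ⁺(t, 1/k)) and let x_{k,t} ∈ ℝ^k be the probability vector whose first entry is y_k and whose remaining k−1 entries all equal (1−y_k)/(k−1). Then lim_{k→∞} H_p(x_{k,t}) = (p/(1−p))·log t, where H_p(x) = (1/(1−p))·log ∑_{i=1}^k x_i^p. -/

import Mathlib

/-!
The optimal spectrum has one large entry `y_k → φ⁺(t, 0) = t` and `k - 1` equal entries of total
mass `1 - y_k`. For `p > 1` the flat part contributes `(1 - y_k)^p (k - 1)^(1 - p) → 0` to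
`∑ xᵢ^p`, so the sum tends to `t^p` and `H_p → log (t^p) / (1 - p)`.
-/

noncomputable section

/-- φ⁺(s,t) = s + t − 2st + 2√(st(1−s)(1−t)). -/
def phiPlus (s t : ℝ) : ℝ :=
  s + t - 2 * s * t + 2 * Real.sqrt (s * t * (1 - s) * (1 - t))

/-- φ⁻(s,t) = s + t − 2st − 2√(st(1−s)(1−t)). -/
def phiMinus (s t : ℝ) : ℝ :=
  s + t - 2 * s * t - 2 * Real.sqrt (s * t * (1 - s) * (1 - t))

end

open Filter Topology

lemma phiPlus_zero_right (s : ℝ) : phiPlus s 0 = s := by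
  simp [phiPlus]

lemma continuous_phiPlus_right (s : ℝ) : Continuous (phiPlus s) := by
  unfold phiPlus
  fun_prop

lemma tendsto_phiPlus_one_div_nat (s : ℝ) :
    Tendsto (fun k : ℕ => phiPlus s (1 / (k : ℝ))) atTop (𝓝 s) := by
  have h := ((continuous_phiPlus_right s).tendsto 0).comp tendsto_one_div_atTop_nhds_zero_nat
  rwa [phiPlus_zero_right] at h

lemma tendsto_min_one_phiPlus_one_div_nat {s : ℝ} (hs : s ≤ 1) :
    Tendsto (fun k : ℕ => min 1 (phiPlus s (1 / (k : ℝ)))) atTop (𝓝 s) := by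
  simpa only [min_eq_right hs] using
    (tendsto_const_nhds (x := 1)).min (tendsto_phiPlus_one_div_nat s)

lemma tendsto_mul_div_rpow_nhds_zero {α : Type*} {l : Filter α} {a n : α → ℝ} {A p : ℝ}
    (ha : Tendsto a l (𝓝 A)) (ha_nonneg : ∀ᶠ x in l, 0 ≤ a x) (hn : Tendsto n l atTop)
    (hp : 1 < p) : Tendsto (fun x => n x * (a x / n x) ^ p) l (𝓝 0) := by
  have hpow : Tendsto (fun x => a x ^ p) l (𝓝 (A ^ p)) :=
    ha.rpow_const (Or.inr (by linarith))
  have hdecay : Tendsto (fun x => n x ^ (1 - p)) l (𝓝 0) := by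
    simpa only [neg_sub, Function.comp_def] using
      (tendsto_rpow_neg_atTop (by linarith : 0 < p - 1)).comp hn
  have hprod := hpow.mul hdecay
  rw [mul_zero] at hprod
  refine hprod.congr' ?_
  filter_upwards [ha_nonneg, hn.eventually_gt_atTop 0] with x hax hnx
  rw [Real.div_rpow hax hnx.le, Real.rpow_sub hnx, Real.rpow_one]
  field_simp

lemma Fin.sum_ite_val_eq_zero {R : Type*} [Ring R] {k : ℕ} (hk : 1 ≤ k) (a b : R) :
    ∑ i : Fin k, (if (i : ℕ) = 0 then a else b) = a + ((k : R) - 1) * b := by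
  obtain ⟨n, rfl⟩ := Nat.exists_eq_add_of_le' hk
  simp [Fin.sum_univ_succ, nsmul_eq_mul]

/-- for fixed t ∈ (0,1) and p ∈ (1,∞), the p-Rényi entropy of the optimal
output spectrum x_{k,t} (largest entry y_k = min(1, φ⁺(t,1/k)), the other k−1 entries
all equal to (1−y_k)/(k−1)) converges, as k → ∞, to (p/(1−p))·log t. -/
theorem limit_renyi_optimal_spectrum (t : ℝ) (ht : t ∈ Set.Ioo (0 : ℝ) 1)
    (p : ℝ) (hp : 1 < p) :
    Filter.Tendsto
      (fun k : ℕ => (1 / (1 - p)) * Real.log (∑ i : Fin k,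
        (if (i : ℕ) = 0 then min 1 (phiPlus t (1 / (k : ℝ)))
          else (1 - min 1 (phiPlus t (1 / (k : ℝ)))) / ((k : ℝ) - 1)) ^ p))
      Filter.atTop (nhds ((p / (1 - p)) * Real.log t)) := by
  set y : ℕ → ℝ := fun k => min 1 (phiPlus t (1 / (k : ℝ)))
  have hy : Tendsto y atTop (𝓝 t) := tendsto_min_one_phiPlus_one_div_nat ht.2.le
  have hflat : Tendsto (fun k : ℕ => ((k : ℝ) - 1) * ((1 - y k) / ((k : ℝ) - 1)) ^ p) atTop
      (𝓝 0) :=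
    tendsto_mul_div_rpow_nhds_zero (tendsto_const_nhds.sub hy)
      (Eventually.of_forall fun k => sub_nonneg.2 (min_le_left _ _))
      (tendsto_atTop_add_const_right _ (-1) tendsto_natCast_atTop_atTop) hp
  have hsum : Tendsto (fun k : ℕ => ∑ i : Fin k,
      (if (i : ℕ) = 0 then y k else (1 - y k) / ((k : ℝ) - 1)) ^ p) atTop (𝓝 (t ^ p)) := by
    have hlim := (hy.rpow_const (p := p) (Or.inl ht.1.ne')).add hflat
    rw [add_zero] at hlim
    refine hlim.congr' ?_
    filter_upwards [eventually_ge_atTop 1] with k hk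
    simp only [apply_ite (· ^ p), Fin.sum_ite_val_eq_zero hk]
  have hlog := (hsum.log (Real.rpow_pos_of_pos ht.1 p).ne').const_mul (1 / (1 - p))
  rwa [Real.log_rpow ht.1, ← mul_assoc, one_div_mul_eq_div] at hlog
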